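/- For every integer m ≥ 1, the set of sums of 2^m many m-th powers of elements of the middle-thirds Cantor set is the full interval [0, 2^m]; that is, {x_1^m + x_2^m + … + x_{2^m}^m : x_1, …, x_{2^m} ∈ 𝒞} = [0, 2^m]. -/

import Mathlib

/-- The middle-thirds Cantor set: all reals of the form `∑ tᵢ / 3^i` (`i ≥ 1`)
with each `tᵢ ∈ {0, 2}`. -/
def middleThirdsCantor : Set ℝ :=
  {x : ℝ | ∃ t : ℕ → ℝ, (∀ i, t i = 0 ∨ t i = 2) ∧ x = ∑' i : ℕ, t i / 3 ^ (i + 1)}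

/-!
Cover the Cantor set at level `k` by `2 ^ k` intervals of length `3⁻¹ ^ k`. Every run of
consecutive intervals is at least as long as one of the gaps next to it (the Cantor set has
thickness `1`), and by convexity `x ↦ x ^ m` enlarges a gap by at most the factor `2 ^ m - 1`
relative to an adjacent run that was at least as long. So in the image chain every run framed by
gaps at least `g` has length at least `g / (2 ^ m - 1)`. For such a chain, start with the whole
chain in each of the `2 ^ m` coordinates and repeatedly split, at the largest gap inside a run,
the run containing it. The other `2 ^ m - 1` runs are framed by gaps at least that large, so
together they are longer than the gap: the two halves of the split leave no hole in the range of
sums, and `y` stays trapped between the sum of the left ends and the sum of the right ends.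
Letting `k → ∞` and using compactness of the Cantor set gives the theorem.
-/

open Finset Function Filter Topology

lemma pow_add_sub_pow_le_pow_add_sub_pow {a b l : ℝ} (ha : 0 ≤ a) (hab : a ≤ b) (hl : 0 ≤ l)
    (m : ℕ) : (a + l) ^ m - a ^ m ≤ (b + l) ^ m - b ^ m := by
  induction m with
  | zero => simp
  | succ m ih =>
    have hinc : 0 ≤ (a + l) ^ m - a ^ m := sub_nonneg.2 (pow_le_pow_left₀ ha (by linarith) m)
    have key : ∀ x : ℝ,
        (x + l) ^ (m + 1) - x ^ (m + 1) = (x + l) * ((x + l) ^ m - x ^ m) + l * x ^ m :=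
      fun x => by ring
    rw [key, key]
    exact add_le_add (mul_le_mul (by linarith) ih hinc (by linarith))
      (mul_le_mul_of_nonneg_left (pow_le_pow_left₀ ha hab m) hl)

lemma pow_add_sub_pow_le_pow_sub_pow_add {p l w : ℝ} (hp : 0 ≤ p) (hl : 0 ≤ l)
    (hw : p + 2 * l ≤ w) (m : ℕ) : (p + l) ^ m - p ^ m ≤ w ^ m - (p + l) ^ m := by
  have h := pow_add_sub_pow_le_pow_add_sub_pow hp (le_add_of_nonneg_right hl) hl m
  have : (p + l + l) ^ m ≤ w ^ m := pow_le_pow_left₀ (by linarith) (by linarith) m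
  linarith

lemma pow_add_sub_pow_le_mul_pow_sub_pow {x l w : ℝ} (hx : 0 ≤ x) (hl : 0 ≤ l)
    (hw : x + l ≤ w) (m : ℕ) : (w + l) ^ m - w ^ m ≤ (2 ^ m - 1) * (w ^ m - x ^ m) := by
  have hc : 0 ≤ w - l := by linarith
  -- doubling both `w - l` and `l`: `(w + l) ^ m - (w - l) ^ m ≤ 2 ^ m * (w ^ m - (w - l) ^ m)`
  have h := pow_add_sub_pow_le_pow_add_sub_pow hc (by linarith : w - l ≤ 2 * (w - l))
    (by linarith : 0 ≤ 2 * l) m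
  rw [show 2 * (w - l) + 2 * l = 2 * w by ring, show w - l + 2 * l = w + l by ring, mul_pow,
    mul_pow] at h
  have : x ^ m ≤ (w - l) ^ m := pow_le_pow_left₀ hx (by linarith) m
  have : (1 : ℝ) ≤ 2 ^ m := one_le_pow₀ (by norm_num)
  nlinarith

lemma exists_max_on_runs {ι α : Type*} [Fintype ι] [LinearOrder α] (g : ℕ → α)
    (a b : ι → ℕ) (h : ∃ j, a j < b j) :
    ∃ js is, a js ≤ is ∧ is < b js ∧ ∀ j i, a j ≤ i → i < b j → g i ≤ g is := by
  obtain ⟨j₀, hj₀⟩ := h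
  have mem : ∀ j i, a j ≤ i → i < b j → i ∈ univ.biUnion fun j => Ico (a j) (b j) :=
    fun j i h₁ h₂ => mem_biUnion.2 ⟨j, mem_univ j, mem_Ico.2 ⟨h₁, h₂⟩⟩
  obtain ⟨is, his, hmax⟩ := exists_max_image _ g ⟨a j₀, mem j₀ _ le_rfl hj₀⟩
  obtain ⟨js, -, hjs⟩ := mem_biUnion.1 his
  exact ⟨js, is, (mem_Ico.1 hjs).1, (mem_Ico.1 hjs).2,
    fun j i h₁ h₂ => hmax i (mem j i h₁ h₂)⟩

lemma sum_comp_update {ι α M : Type*} [Fintype ι] [DecidableEq ι] [AddCommMonoid M]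
    (F : α → M) (g : ι → α) (i : ι) (x : α) :
    ∑ j, F (update g i x j) = ∑ j ∈ {i}ᶜ, F (g j) + F x := by
  rw [Fintype.sum_eq_sum_compl_add i, update_self]
  congr 1
  exact sum_congr rfl fun j hj => by rw [update_of_ne (by simpa using hj)]

namespace IntervalChain

/- A chain is a sequence of intervals `[u i, v i]`, `i < N`, from left to right; the run `a..b`
is the stretch from `u a` to `v b`. In `FramedBy`, a missing gap at an end of the chain counts as
arbitrarily large. -/

variable (u v : ℕ → ℝ)

def gap (i : ℕ) : ℝ := u (i + 1) - v i

def FramedBy (N : ℕ) (M : ℝ) (a b : ℕ) : Prop :=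
  (a = 0 ∨ M ≤ gap u v (a - 1)) ∧ (b + 1 = N ∨ M ≤ gap u v b)

/-- Newhouse thickness at least `1 / (n - 1)`: a run framed by gaps at least as large as a gap
`g` has length at least `g / (n - 1)`. -/
def IsThick (n N : ℕ) : Prop :=
  ∀ i a b, i + 1 < N → a ≤ b → b < N → FramedBy u v N (gap u v i) a b →
    gap u v i ≤ (n - 1) * (v b - u a)

/-- The invariant of the splitting: no gap inside a run exceeds a gap framing a run. -/
def Framed {n : ℕ} (N : ℕ) (a b : Fin n → ℕ) : Prop :=
  ∀ j j' i, a j' ≤ i → i < b j' → FramedBy u v N (gap u v i) (a j) (b j)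

/-- Thickness at least `1` at the run `a..b`. -/
def AdjacentGapLe (N a b : ℕ) : Prop :=
  (0 < a ∧ gap u v (a - 1) ≤ v b - u a) ∨ (b + 1 < N ∧ gap u v b ≤ v b - u a) ∨
    (a = 0 ∧ b + 1 = N)

variable {u v} {n N : ℕ}

lemma Framed.update_right {a b : Fin n → ℕ} (hfr : Framed u v N a b) {js : Fin n} {is : ℕ}
    (his : is ≤ b js) (hmax : ∀ j i, a j ≤ i → i < b j → gap u v i ≤ gap u v is) :
    Framed u v N a (update b js is) := by
  intro j j' i h₁ h₂
  have h₂' : i < b j' := by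
    rcases eq_or_ne j' js with rfl | hj
    · simp only [update_self] at h₂; omega
    · rwa [update_of_ne hj] at h₂
  refine ⟨(hfr j j' i h₁ h₂').1, ?_⟩
  rcases eq_or_ne j js with rfl | hj
  · rw [update_self]; exact Or.inr (hmax j' i h₁ h₂')
  · rw [update_of_ne hj]; exact (hfr j j' i h₁ h₂').2

lemma Framed.update_left {a b : Fin n → ℕ} (hfr : Framed u v N a b) {js : Fin n} {is : ℕ}
    (his : a js ≤ is) (hmax : ∀ j i, a j ≤ i → i < b j → gap u v i ≤ gap u v is) :
    Framed u v N (update a js (is + 1)) b := by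
  intro j j' i h₁ h₂
  have h₁' : a j' ≤ i := by
    rcases eq_or_ne j' js with rfl | hj
    · simp only [update_self] at h₁; omega
    · rwa [update_of_ne hj] at h₁
  refine ⟨?_, (hfr j j' i h₁' h₂).2⟩
  rcases eq_or_ne j js with rfl | hj
  · rw [update_self]; exact Or.inr (hmax j' i h₁' h₂)
  · rw [update_of_ne hj]; exact (hfr j j' i h₁' h₂).1

lemma IsThick.sum_update_le_sum_update (hn : 2 ≤ n) (hthick : IsThick u v n N)
    {a b : Fin n → ℕ} (hab : a ≤ b) (hbN : ∀ j, b j < N) (hfr : Framed u v N a b)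
    {js : Fin n} {is : ℕ} (hais : a js ≤ is) (hisb : is < b js) :
    ∑ j, u (update a js (is + 1) j) ≤ ∑ j, v (update b js is j) := by
  have hbridge :
      ∀ j ∈ ({js}ᶜ : Finset (Fin n)), gap u v is ≤ (n - 1) * (v (b j) - u (a j)) :=
    fun j _ => hthick is (a j) (b j) (by linarith [hbN js]) (hab j) (hbN j)
      (hfr j js is hais hisb)
  have hcard : ((({js}ᶜ : Finset (Fin n)).card : ℕ) : ℝ) = n - 1 := by
    rw [card_compl, card_singleton, Fintype.card_fin, Nat.cast_sub (by omega), Nat.cast_one]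
  have hsum := card_nsmul_le_sum _ _ _ hbridge
  rw [nsmul_eq_mul, hcard, ← mul_sum] at hsum
  have hcover := le_of_mul_le_mul_left hsum (by rw [sub_pos]; exact_mod_cast hn)
  rw [sum_comp_update, sum_comp_update]
  rw [sum_sub_distrib, gap] at hcover
  linarith

theorem IsThick.exists_sum_le_le_sum (hn : 2 ≤ n) (hthick : IsThick u v n N)
    (a b : Fin n → ℕ) (hab : a ≤ b) (hbN : ∀ j, b j < N) (hfr : Framed u v N a b)
    (y : ℝ) (hy₁ : ∑ j, u (a j) ≤ y) (hy₂ : y ≤ ∑ j, v (b j)) :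
    ∃ e, a ≤ e ∧ e ≤ b ∧ ∑ j, u (e j) ≤ y ∧ y ≤ ∑ j, v (e j) := by
  by_cases hba : b ≤ a
  · exact ⟨a, le_rfl, hab, hy₁, le_antisymm hba hab ▸ hy₂⟩
  obtain ⟨js, is, hais, hisb, hmax⟩ :=
    exists_max_on_runs (gap u v) a b (by simpa [Pi.le_def] using hba)
  have hcover := hthick.sum_update_le_sum_update hn hab hbN hfr hais hisb
  by_cases hy : y ≤ ∑ j, v (update b js is j)
  · have hb' : update b js is ≤ b := update_le_iff.2 ⟨hisb.le, fun _ _ => le_rfl⟩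
    have hab' : a ≤ update b js is := le_update_iff.2 ⟨hais, fun j _ => hab j⟩
    have : ∑ j, (update b js is j - a j) < ∑ j, (b j - a j) :=
      sum_lt_sum (fun j _ => Nat.sub_le_sub_right (hb' j) _)
        ⟨js, mem_univ js, by rw [update_self]; omega⟩
    obtain ⟨e, hae, heb, h₁, h₂⟩ :=
      IsThick.exists_sum_le_le_sum hn hthick a (update b js is)
      hab' (fun j => (hb' j).trans_lt (hbN j)) (hfr.update_right hisb.le hmax) y hy₁ hy
    exact ⟨e, hae, heb.trans hb', h₁, h₂⟩
  · have ha' : a ≤ update a js (is + 1) := le_update_iff.2 ⟨by omega, fun _ _ => le_rfl⟩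
    have hab' : update a js (is + 1) ≤ b := update_le_iff.2 ⟨hisb, fun j _ => hab j⟩
    have : ∑ j, (b j - update a js (is + 1) j) < ∑ j, (b j - a j) :=
      sum_lt_sum (fun j _ => Nat.sub_le_sub_left (ha' j) _)
        ⟨js, mem_univ js, by rw [update_self]; omega⟩
    obtain ⟨e, hae, heb, h₁, h₂⟩ := IsThick.exists_sum_le_le_sum hn hthick
      (update a js (is + 1)) b hab' hbN (hfr.update_left hais hmax) y
      (hcover.trans (not_le.1 hy).le) hy₂
    exact ⟨e, ha'.trans hae, heb, h₁, h₂⟩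
termination_by ∑ j, (b j - a j)

theorem IsThick.exists_sum_le_le_sum_of_mem_Icc (hn : 2 ≤ n) (hN : 0 < N)
    (hthick : IsThick u v n N) {y : ℝ} (hy : y ∈ Set.Icc (n * u 0) (n * v (N - 1))) :
    ∃ e : Fin n → ℕ, (∀ j, e j < N) ∧ ∑ j, u (e j) ≤ y ∧ y ≤ ∑ j, v (e j) := by
  obtain ⟨e, -, he, h₁, h₂⟩ := hthick.exists_sum_le_le_sum hn 0 (fun _ => N - 1)
    (fun _ => Nat.zero_le _) (fun _ => Nat.sub_lt hN one_pos)
    (fun _ _ _ _ _ => ⟨Or.inl rfl, Or.inl (Nat.sub_add_cancel hN)⟩)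
    y (by simpa using hy.1) (by simpa using hy.2)
  exact ⟨e, fun j => (he j).trans_lt (Nat.sub_lt hN one_pos), h₁, h₂⟩

theorem isThick_pow {m N : ℕ} (hm : 1 ≤ m) (hu : ∀ i, 0 ≤ u i) (hu₁ : ∀ i, u i ≤ 1)
    (huv : ∀ i, u i ≤ v i) (hgap : ∀ i, i + 1 < N → 0 ≤ gap u v i) (h₀ : u 0 = 0)
    (h₁ : v (N - 1) = 1) (hadj : ∀ a b, a ≤ b → b < N → AdjacentGapLe u v N a b) :
    IsThick (fun i => u i ^ m) (fun i => v i ^ m) (2 ^ m) N := by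
  intro i a b hi hab hb ⟨hA, hB⟩
  have h2m : (1 : ℝ) ≤ ((2 ^ m : ℕ) : ℝ) - 1 := by
    have : (2 : ℝ) ^ 1 ≤ 2 ^ m := pow_le_pow_right₀ (by norm_num) hm
    push_cast; linarith
  simp only [gap] at hA hB ⊢
  rcases hadj a b hab hb with ⟨ha, hlen⟩ | ⟨hb₁, hlen⟩ | ⟨rfl, hb₁⟩
  · have hl := hgap (a - 1) (by omega)
    have hM := hA.resolve_left ha.ne'
    rw [gap, Nat.sub_add_cancel ha] at hl hlen
    rw [Nat.sub_add_cancel ha] at hM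
    have h := pow_add_sub_pow_le_pow_sub_pow_add ((hu (a - 1)).trans (huv _)) hl (w := v b)
      (by linarith) m
    rw [add_sub_cancel] at h
    have hD : u a ^ m ≤ v b ^ m := pow_le_pow_left₀ (hu a) (by linarith) m
    linarith [le_mul_of_one_le_left (sub_nonneg.2 hD) h2m]
  · have hl := hgap b hb₁
    have hM := hB.resolve_left hb₁.ne
    rw [gap] at hl hlen
    have h := pow_add_sub_pow_le_mul_pow_sub_pow (hu a) hl (w := v b) (by linarith) m
    rw [add_sub_cancel] at h
    push_cast
    linarith
  · obtain rfl : b = N - 1 := by omega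
    rw [h₀, h₁, zero_pow (by omega), one_pow, sub_zero, mul_one]
    have : u (i + 1) ^ m ≤ 1 := pow_le_one₀ (hu _) (hu₁ _)
    have : 0 ≤ v i ^ m := pow_nonneg ((hu i).trans (huv i)) m
    linarith

end IntervalChain

open IntervalChain

theorem middleThirdsCantor_eq_cantorSet : middleThirdsCantor = cantorSet := by
  rw [cantorSet_eq_zero_two_ofDigits]
  ext x
  constructor
  · rintro ⟨t, ht, rfl⟩
    refine ⟨fun i => if t i = 0 then 0 else 2, fun i => by dsimp only; split_ifs <;> decide, ?_⟩
    refine tsum_congr fun i => ?_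
    rcases ht i with h | h <;> simp [Real.ofDigitsTerm, h, div_eq_mul_inv]
  · rintro ⟨a, ha, rfl⟩
    refine ⟨fun i => (a i : ℕ), fun i => ?_, tsum_congr fun i => ?_⟩
    · have := ha i
      dsimp only
      generalize a i = d at this ⊢
      fin_cases d <;> simp_all
    · simp [Real.ofDigitsTerm, div_eq_mul_inv]

/-- `cantorLeft k i` is the left end of the `i`-th of the `2 ^ k` intervals of length `3⁻¹ ^ k`
whose union is the `k`-th stage of the Cantor set. -/
noncomputable def cantorLeft : ℕ → ℕ → ℝ
  | 0, _ => 0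
  | k + 1, i => if i < 2 ^ k then cantorLeft k i / 3 else (2 + cantorLeft k (i - 2 ^ k)) / 3

noncomputable def cantorRight (k i : ℕ) : ℝ := cantorLeft k i + 3⁻¹ ^ k

lemma cantorLeft_succ_of_lt {k i : ℕ} (h : i < 2 ^ k) :
    cantorLeft (k + 1) i = cantorLeft k i / 3 := if_pos h

lemma cantorLeft_succ_add (k t : ℕ) :
    cantorLeft (k + 1) (2 ^ k + t) = (2 + cantorLeft k t) / 3 := by
  rw [cantorLeft, if_neg (by omega), Nat.add_sub_cancel_left]

lemma cantorRight_succ_of_lt {k i : ℕ} (h : i < 2 ^ k) :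
    cantorRight (k + 1) i = cantorRight k i / 3 := by
  rw [cantorRight, cantorRight, cantorLeft_succ_of_lt h, pow_succ]; ring

lemma cantorRight_succ_add (k t : ℕ) :
    cantorRight (k + 1) (2 ^ k + t) = (2 + cantorRight k t) / 3 := by
  rw [cantorRight, cantorRight, cantorLeft_succ_add, pow_succ]; ring

lemma cantorLeft_mem_cantorSet (k i : ℕ) : cantorLeft k i ∈ cantorSet := by
  induction k generalizing i with
  | zero => exact zero_mem_cantorSet
  | succ k ih =>
    rw [cantorLeft, cantorSet_eq_union_halves]
    split_ifs
    · exact Or.inl ⟨_, ih i, rfl⟩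
    · exact Or.inr ⟨_, ih _, rfl⟩

lemma cantorLeft_nonneg (k i : ℕ) : 0 ≤ cantorLeft k i :=
  (cantorSet_subset_unitInterval (cantorLeft_mem_cantorSet k i)).1

lemma cantorLeft_le_one (k i : ℕ) : cantorLeft k i ≤ 1 :=
  (cantorSet_subset_unitInterval (cantorLeft_mem_cantorSet k i)).2

lemma cantorLeft_le_cantorRight (k i : ℕ) : cantorLeft k i ≤ cantorRight k i :=
  le_add_of_nonneg_right (by positivity)

lemma cantorLeft_first (k : ℕ) : cantorLeft k 0 = 0 := by
  induction k with
  | zero => rfl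
  | succ k ih => rw [cantorLeft_succ_of_lt (by positivity), ih, zero_div]

lemma cantorRight_last (k : ℕ) : cantorRight k (2 ^ k - 1) = 1 := by
  induction k with
  | zero => simp [cantorRight, cantorLeft]
  | succ k ih =>
    have h : 2 ^ (k + 1) - 1 = 2 ^ k + (2 ^ k - 1) := by
      rw [pow_succ]; have := k.one_le_two_pow; omega
    rw [h, cantorRight_succ_add, ih]; norm_num

lemma gap_cantor_succ_of_lt (k : ℕ) {i : ℕ} (h : i + 1 < 2 ^ k) :
    gap (cantorLeft (k + 1)) (cantorRight (k + 1)) i =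
      gap (cantorLeft k) (cantorRight k) i / 3 := by
  rw [gap, gap, cantorLeft_succ_of_lt h, cantorRight_succ_of_lt (by omega)]; ring

lemma gap_cantor_succ_add (k t : ℕ) :
    gap (cantorLeft (k + 1)) (cantorRight (k + 1)) (2 ^ k + t) =
      gap (cantorLeft k) (cantorRight k) t / 3 := by
  rw [gap, gap, cantorRight_succ_add, add_assoc, cantorLeft_succ_add]; ring

lemma gap_cantor_succ_middle (k : ℕ) :
    gap (cantorLeft (k + 1)) (cantorRight (k + 1)) (2 ^ k - 1) = 3⁻¹ := by
  have h := k.one_le_two_pow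
  rw [gap, Nat.sub_add_cancel h, ← add_zero (2 ^ k), cantorLeft_succ_add, add_zero,
    cantorRight_succ_of_lt (by omega), cantorRight_last, cantorLeft_first]
  norm_num

lemma gap_cantor_le_one (k i : ℕ) : gap (cantorLeft k) (cantorRight k) i ≤ 1 := by
  have := cantorLeft_le_cantorRight k i
  rw [gap]; linarith [cantorLeft_le_one k (i + 1), cantorLeft_nonneg k i]

lemma gap_cantor_succ_eq {k i : ℕ} (h : i + 1 < 2 ^ (k + 1)) :
    gap (cantorLeft (k + 1)) (cantorRight (k + 1)) i = 3⁻¹ ∨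
      ∃ i', i' + 1 < 2 ^ k ∧ gap (cantorLeft (k + 1)) (cantorRight (k + 1)) i =
        gap (cantorLeft k) (cantorRight k) i' / 3 := by
  rcases lt_trichotomy (i + 1) (2 ^ k) with hi | hi | hi
  · exact Or.inr ⟨i, hi, gap_cantor_succ_of_lt k hi⟩
  · exact Or.inl (by rw [show i = 2 ^ k - 1 by omega, gap_cantor_succ_middle])
  · obtain ⟨t, rfl⟩ : ∃ t, i = 2 ^ k + t := ⟨i - 2 ^ k, by omega⟩
    exact Or.inr ⟨t, by rw [pow_succ] at h; omega, gap_cantor_succ_add k t⟩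

lemma gap_cantor_nonneg {k i : ℕ} (h : i + 1 < 2 ^ k) :
    0 ≤ gap (cantorLeft k) (cantorRight k) i := by
  induction k generalizing i with
  | zero => simp at h
  | succ k ih =>
    rcases gap_cantor_succ_eq h with h' | ⟨i', hi', h'⟩ <;> rw [h']
    · norm_num
    · linarith [ih hi']

lemma adjacentGapLe_cantor_succ_of_lt {k a b : ℕ} (hab : a ≤ b) (hb : b < 2 ^ k)
    (h : AdjacentGapLe (cantorLeft k) (cantorRight k) (2 ^ k) a b) :
    AdjacentGapLe (cantorLeft (k + 1)) (cantorRight (k + 1)) (2 ^ (k + 1)) a b := by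
  have hpow : 2 ^ (k + 1) = 2 ^ k + 2 ^ k := by ring
  unfold AdjacentGapLe
  rw [cantorRight_succ_of_lt hb, cantorLeft_succ_of_lt (hab.trans_lt hb)]
  rcases h with ⟨ha, h⟩ | ⟨hb₁, h⟩ | ⟨rfl, hb₁⟩
  · refine Or.inl ⟨ha, ?_⟩
    rw [gap_cantor_succ_of_lt k (by omega)]; linarith
  · refine Or.inr (Or.inl ⟨by omega, ?_⟩)
    rw [gap_cantor_succ_of_lt k hb₁]; linarith
  · obtain rfl : b = 2 ^ k - 1 := by omega
    refine Or.inr (Or.inl ⟨by omega, ?_⟩)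
    rw [gap_cantor_succ_middle, cantorRight_last, cantorLeft_first]; norm_num

lemma adjacentGapLe_cantor_succ_add {k s t : ℕ} (ht : t < 2 ^ k)
    (h : AdjacentGapLe (cantorLeft k) (cantorRight k) (2 ^ k) s t) :
    AdjacentGapLe (cantorLeft (k + 1)) (cantorRight (k + 1)) (2 ^ (k + 1)) (2 ^ k + s)
      (2 ^ k + t) := by
  have hpow : 2 ^ (k + 1) = 2 ^ k + 2 ^ k := by ring
  unfold AdjacentGapLe
  rw [cantorRight_succ_add, cantorLeft_succ_add]
  rcases h with ⟨hs, h⟩ | ⟨ht₁, h⟩ | ⟨rfl, ht₁⟩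
  · refine Or.inl ⟨by omega, ?_⟩
    rw [show 2 ^ k + s - 1 = 2 ^ k + (s - 1) by omega, gap_cantor_succ_add]; linarith
  · refine Or.inr (Or.inl ⟨by omega, ?_⟩)
    rw [gap_cantor_succ_add]; linarith
  · refine Or.inl ⟨by positivity, ?_⟩
    rw [add_zero, gap_cantor_succ_middle, show t = 2 ^ k - 1 by omega, cantorRight_last,
      cantorLeft_first]
    norm_num

lemma adjacentGapLe_cantor_succ_of_lt_add {k a t : ℕ} (ha : a < 2 ^ k) (ht : t < 2 ^ k) :
    AdjacentGapLe (cantorLeft (k + 1)) (cantorRight (k + 1)) (2 ^ (k + 1)) a (2 ^ k + t) := by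
  have hlen : 3⁻¹ ≤ cantorRight (k + 1) (2 ^ k + t) - cantorLeft (k + 1) a := by
    rw [cantorRight_succ_add, cantorLeft_succ_of_lt ha]
    linarith [cantorLeft_le_one k a, cantorLeft_nonneg k t, cantorLeft_le_cantorRight k t]
  by_cases ha₀ : 0 < a
  · refine Or.inl ⟨ha₀, ?_⟩
    rw [gap_cantor_succ_of_lt k (by omega)]; linarith [gap_cantor_le_one k (a - 1)]
  by_cases hb₁ : 2 ^ k + t + 1 < 2 ^ (k + 1)
  · refine Or.inr (Or.inl ⟨hb₁, ?_⟩)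
    rw [gap_cantor_succ_add]; linarith [gap_cantor_le_one k t]
  · exact Or.inr (Or.inr ⟨by omega, by omega⟩)

lemma adjacentGapLe_cantor {k a b : ℕ} (hab : a ≤ b) (hb : b < 2 ^ k) :
    AdjacentGapLe (cantorLeft k) (cantorRight k) (2 ^ k) a b := by
  induction k generalizing a b with
  | zero => exact Or.inr (Or.inr ⟨by simp at hb; omega, by simp at hb; omega⟩)
  | succ k ih =>
    have hpow : 2 ^ (k + 1) = 2 ^ k + 2 ^ k := by ring
    by_cases hbk : b < 2 ^ k
    · exact adjacentGapLe_cantor_succ_of_lt hab hbk (ih hab hbk)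
    obtain ⟨t, rfl⟩ : ∃ t, b = 2 ^ k + t := ⟨b - 2 ^ k, by omega⟩
    by_cases hak : a < 2 ^ k
    · exact adjacentGapLe_cantor_succ_of_lt_add hak (by omega)
    obtain ⟨s, rfl⟩ : ∃ s, a = 2 ^ k + s := ⟨a - 2 ^ k, by omega⟩
    exact adjacentGapLe_cantor_succ_add (by omega) (ih (by omega) (by omega))

lemma isThick_cantor_pow {m : ℕ} (hm : 1 ≤ m) (k : ℕ) :
    IsThick (fun i => cantorLeft k i ^ m) (fun i => cantorRight k i ^ m) (2 ^ m) (2 ^ k) :=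
  isThick_pow hm (cantorLeft_nonneg k) (cantorLeft_le_one k) (cantorLeft_le_cantorRight k)
    (fun _ => gap_cantor_nonneg) (cantorLeft_first k) (cantorRight_last k)
    (fun _ _ => adjacentGapLe_cantor)

lemma exists_cantor_sum_le_le_sum {m : ℕ} (hm : 1 ≤ m) (k : ℕ) {y : ℝ}
    (hy : y ∈ Set.Icc (0 : ℝ) (2 ^ m)) :
    ∃ e : Fin (2 ^ m) → ℕ,
      ∑ j, cantorLeft k (e j) ^ m ≤ y ∧ y ≤ ∑ j, cantorRight k (e j) ^ m := by
  obtain ⟨e, -, he⟩ := (isThick_cantor_pow hm k).exists_sum_le_le_sum_of_mem_Icc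
    (Nat.le_self_pow (by omega) 2) (by positivity) (y := y)
    (by rwa [cantorLeft_first, zero_pow (by omega), mul_zero, cantorRight_last, one_pow, mul_one,
      Nat.cast_pow, Nat.cast_ofNat])
  exact ⟨e, he⟩

lemma exists_cantor_sum_pow_eq {m : ℕ} (hm : 1 ≤ m) {y : ℝ}
    (hy : y ∈ Set.Icc (0 : ℝ) (2 ^ m)) :
    ∃ x : Fin (2 ^ m) → ℝ, (∀ j, x j ∈ cantorSet) ∧ y = ∑ j, x j ^ m := by
  choose e hlow hup using fun k => exists_cantor_sum_le_le_sum hm k hy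
  obtain ⟨x, hx, φ, hφ, hlim⟩ :=
    (isCompact_univ_pi fun _ => isCompact_cantorSet).tendsto_subseq
    (x := fun k j => cantorLeft k (e k j)) fun k j _ => cantorLeft_mem_cantorSet k _
  have hlim' : ∀ j, Tendsto (fun l => cantorLeft (φ l) (e (φ l) j)) atTop (𝓝 (x j)) :=
    tendsto_pi_nhds.1 hlim
  have hwidth : Tendsto (fun l => (3 : ℝ)⁻¹ ^ φ l) atTop (𝓝 0) :=
    (tendsto_pow_atTop_nhds_zero_of_lt_one (by norm_num) (by norm_num)).comp hφ.tendsto_atTop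
  have hlow' : Tendsto (fun l => ∑ j, cantorLeft (φ l) (e (φ l) j) ^ m) atTop
      (𝓝 (∑ j, x j ^ m)) :=
    tendsto_finsetSum _ fun j _ => (hlim' j).pow m
  have hup' : Tendsto (fun l => ∑ j, cantorRight (φ l) (e (φ l) j) ^ m) atTop
      (𝓝 (∑ j, x j ^ m)) := by
    simpa [cantorRight] using tendsto_finsetSum univ fun j _ => ((hlim' j).add hwidth).pow m
  exact ⟨x, fun j => hx j (Set.mem_univ j),
    le_antisymm (ge_of_tendsto hup' (.of_forall fun l => hup _))
      (le_of_tendsto hlow' (.of_forall fun l => hlow _))⟩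

theorem sums_of_two_pow_m_mth_powers_eq_Icc (m : ℕ) (hm : 1 ≤ m) :
    {x : ℝ | ∃ f : Fin (2 ^ m) → ℝ,
        (∀ j, f j ∈ middleThirdsCantor) ∧ x = ∑ j, f j ^ m} =
      Set.Icc (0 : ℝ) (2 ^ m) := by
  rw [middleThirdsCantor_eq_cantorSet]
  ext y
  refine ⟨?_, exists_cantor_sum_pow_eq hm⟩
  rintro ⟨x, hx, rfl⟩
  have hx₀₁ := fun j => cantorSet_subset_unitInterval (hx j)
  refine ⟨sum_nonneg fun j _ => pow_nonneg (hx₀₁ j).1 m, ?_⟩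
  calc ∑ j, x j ^ m ≤ ∑ _j : Fin (2 ^ m), (1 : ℝ) :=
        sum_le_sum fun j _ => pow_le_one₀ (hx₀₁ j).1 (hx₀₁ j).2
    _ = 2 ^ m := by simp
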